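/- arXiv:2402.12161 — 2 statements merged into one kernel-verified Lean document; each statement's English description precedes it below -/
import Mathlib

section
/- (Randomized smoothing robustness, binary linear case) Let d : ℝ^m → {0, 1} be d(z) = 1 if ⟨u, z⟩ ≥ c, else 0, with ‖u‖₂ = 1. Define the smoothed classifier d̂(z) = argmax over y of P(d(z + ε) = y) with ε ~ N(0, σ²I_m). Suppose at input z we have P(d(z + ε) = 1) ≥ p_A > 1/2. Then for every δ with ‖δ‖₂ < σ·Φ⁻¹(p_A), we have d̂(z + δ) = 1. -/
/-!
Projecting the isotropic noise `ε ~ N(0, σ²I)` onto the unit normal `u` gives a one-dimensional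
`N(0, σ²)` variable, so the smoothed probability of class 1 at `w` is `Φ((⟨u, w⟩ - c) / σ)`.
The hypothesis gives `Φ⁻¹(p_A) ≤ (⟨u, z⟩ - c) / σ`, and by Cauchy–Schwarz the perturbation moves
the argument of `Φ` by `|⟨u, δ⟩| / σ ≤ ‖δ‖ / σ < Φ⁻¹(p_A)`, so it stays positive and the
probability stays above `Φ(0) = 1/2`.
-/

open MeasureTheory ProbabilityTheory

/-- The standard normal CDF. -/
noncomputable def stdGaussianCDF (x : ℝ) : ℝ :=
  (gaussianReal 0 1 (Set.Iic x)).toReal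

/-- The inverse of the standard normal CDF. -/
noncomputable def stdGaussianCDFInv : ℝ → ℝ :=
  Function.invFun stdGaussianCDF

open Set
open scoped NNReal ENNReal

namespace ProbabilityTheory

section CDF

variable {μ : Measure ℝ} [IsProbabilityMeasure μ]

lemma measure_Ioc_eq_ofReal_cdf_sub (x y : ℝ) :
    μ (Ioc x y) = ENNReal.ofReal (cdf μ y - cdf μ x) := by
  rw [← (cdf μ).measure_Ioc, measure_cdf]

lemma continuous_cdf [NullSingletonClass μ] : Continuous (cdf μ) := by
  refine continuous_iff_continuousAt.2 fun x => continuousAt_iff_continuous_left_right.2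
    ⟨?_, (cdf μ).right_continuous x⟩
  rw [← continuousWithinAt_Iio_iff_Iic, (monotone_cdf μ).continuousWithinAt_Iio_iff_leftLim_eq]
  have hjump := (cdf μ).measure_singleton x
  rw [measure_cdf, measure_singleton, eq_comm, ENNReal.ofReal_eq_zero, sub_nonpos] at hjump
  exact le_antisymm ((monotone_cdf μ).leftLim_le le_rfl) hjump

lemma strictMono_cdf (h : volume ≪ μ) : StrictMono (cdf μ) := by
  intro x y hxy
  by_contra! hle
  have hnull : μ (Ioc x y) = 0 := by
    rw [measure_Ioc_eq_ofReal_cdf_sub, ENNReal.ofReal_eq_zero]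
    linarith
  have hvol := h hnull
  rw [Real.volume_Ioc, ENNReal.ofReal_eq_zero] at hvol
  linarith

lemma exists_cdf_eq [NullSingletonClass μ] {p : ℝ} (hp : p ∈ Ioo 0 1) : ∃ x, cdf μ x = p := by
  obtain ⟨a, ha⟩ := ((tendsto_cdf_atBot μ).eventually (eventually_lt_nhds hp.1)).exists
  obtain ⟨b, hb⟩ := ((tendsto_cdf_atTop μ).eventually (eventually_gt_nhds hp.2)).exists
  exact mem_range_of_exists_le_of_exists_ge continuous_cdf ⟨a, ha.le⟩ ⟨b, hb.le⟩

end CDF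

instance {m : ℝ} {v : ℝ≥0} [NeZero v] : NullSingletonClass (gaussianReal m v) :=
  ⟨fun x => gaussianReal_absolutelyContinuous m (NeZero.ne v) (measure_singleton x)⟩

lemma map_pi_gaussianReal_sum_mul {ι : Type*} [Fintype ι] (v : ℝ≥0) (u : ι → ℝ) :
    (Measure.pi fun _ : ι => gaussianReal 0 v).map (fun e => ∑ i, u i * e i)
      = gaussianReal 0 (.mk (∑ i, u i ^ 2) (by positivity) * v) := by
  have hsplit : (Measure.pi fun _ : ι => gaussianReal 0 v).map (fun e => ∑ i, u i * e i)
      = (Measure.pi fun i => gaussianReal 0 (.mk (u i ^ 2) (sq_nonneg _) * v)).map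
          (fun p => ∑ i, p i) := by
    have hscale := fun i => gaussianReal_map_const_mul (μ := 0) (v := v) (u i)
    simp only [mul_zero] at hscale
    simp only [← hscale]
    rw [← Measure.pi_map_pi (fun i => (measurable_const_mul (u i)).aemeasurable),
      Measure.map_map (by fun_prop) (by fun_prop)]
    rfl
  refine Measure.ext_of_charFun ?_
  ext t
  rw [hsplit, charFun_map_sum_pi_eq_prod, Finset.prod_apply]
  simp only [charFun_gaussianReal, ← Complex.exp_sum]
  push_cast
  simp only [mul_zero, zero_mul, zero_sub, Finset.sum_neg_distrib, Finset.sum_div, Finset.sum_mul]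

end ProbabilityTheory

lemma stdGaussianCDF_eq_cdf : stdGaussianCDF = cdf (gaussianReal 0 1) :=
  funext fun x => (cdf_eq_real _ x).symm

lemma strictMono_stdGaussianCDF : StrictMono stdGaussianCDF :=
  stdGaussianCDF_eq_cdf ▸ strictMono_cdf (gaussianReal_absolutelyContinuous' 0 one_ne_zero)

lemma stdGaussianCDF_lt_one (x : ℝ) : stdGaussianCDF x < 1 :=
  (strictMono_stdGaussianCDF (lt_add_one x)).trans_le (stdGaussianCDF_eq_cdf ▸ cdf_le_one _ _)

lemma stdGaussianCDF_stdGaussianCDFInv {p : ℝ} (hp : p ∈ Ioo 0 1) :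
    stdGaussianCDF (stdGaussianCDFInv p) = p :=
  Function.invFun_eq (stdGaussianCDF_eq_cdf ▸ exists_cdf_eq hp)

lemma gaussianReal_apply_Ici {σ : ℝ≥0} (hσ : 0 < σ) (t : ℝ) :
    gaussianReal 0 (σ ^ 2) (Ici t) = ENNReal.ofReal (stdGaussianCDF (-t / σ)) := by
  -- scaling by `-σ` rather than `σ` turns the upper tail into a lower one
  have hmap : gaussianReal 0 (σ ^ 2) = (gaussianReal 0 1).map (fun x => -(σ : ℝ) * x) := by
    rw [gaussianReal_map_const_mul, mul_zero, mul_one]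
    congr 1
    ext
    simp
  have hpre : (fun x : ℝ => -(σ : ℝ) * x) ⁻¹' Ici t = Iic (-t / σ) := by
    ext x
    simp only [mem_preimage, mem_Ici, mem_Iic, le_div_iff₀ (NNReal.coe_pos.2 hσ)]
    constructor <;> intro h <;> linarith
  rw [hmap, Measure.map_apply (by fun_prop) measurableSet_Ici, hpre, stdGaussianCDF_eq_cdf,
    ofReal_cdf]

lemma stdGaussianCDF_zero : stdGaussianCDF 0 = 1 / 2 := by
  have hIci : (gaussianReal 0 1).real (Ici 0) = stdGaussianCDF 0 := by
    have h := gaussianReal_apply_Ici one_pos 0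
    rw [one_pow, NNReal.coe_one, div_one, neg_zero] at h
    rw [measureReal_def, h]
    exact ENNReal.toReal_ofReal ENNReal.toReal_nonneg
  have hIio : (gaussianReal 0 1).real (Iio 0) = stdGaussianCDF 0 :=
    measureReal_congr Iio_ae_eq_Iic
  have hsum := probReal_add_probReal_compl (μ := gaussianReal 0 1) (measurableSet_Ici (a := 0))
  rw [compl_Ici, hIci, hIio] at hsum
  linarith

lemma pi_gaussianReal_halfspace {ι : Type*} [Fintype ι] {σ : ℝ≥0} (hσ : 0 < σ) {u : ι → ℝ}
    (hu : ∑ i, u i ^ 2 = 1) (a : ℝ) :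
    Measure.pi (fun _ : ι => gaussianReal 0 (σ ^ 2)) {e | a ≤ ∑ i, u i * e i}
      = ENNReal.ofReal (stdGaussianCDF (-a / σ)) := by
  have hlaw := map_pi_gaussianReal_sum_mul (σ ^ 2) u
  simp only [hu, NNReal.mk_one, one_mul] at hlaw
  calc _ = (Measure.pi fun _ : ι => gaussianReal 0 (σ ^ 2)).map (fun e => ∑ i, u i * e i) (Ici a) :=
        (Measure.map_apply (by fun_prop) measurableSet_Ici).symm
    _ = _ := by rw [hlaw, gaussianReal_apply_Ici hσ]

lemma abs_sum_mul_le_sqrt_sum_sq {ι : Type*} [Fintype ι] {u : ι → ℝ} (hu : ∑ i, u i ^ 2 = 1)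
    (δ : ι → ℝ) : |∑ i, u i * δ i| ≤ Real.sqrt (∑ i, δ i ^ 2) :=
  Real.abs_le_sqrt (by simpa [hu] using Finset.sum_mul_sq_le_sq_mul_sq Finset.univ u δ)

theorem randomized_smoothing_halfspace_general {m : ℕ} (σ : NNReal) (hσ : 0 < σ)
    (u : Fin m → ℝ) (hu : ∑ i, u i ^ 2 = 1) (c : ℝ)
    (d : (Fin m → ℝ) → Fin 2)
    (hd : ∀ z, d z = if c ≤ ∑ i, u i * z i then 1 else 0)
    (z : Fin m → ℝ) (pA : ℝ) (hpA : 1 / 2 < pA)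
    (hmaj : ENNReal.ofReal pA ≤
      (Measure.pi fun _ : Fin m => gaussianReal 0 (σ ^ 2)) {e | d (z + e) = 1}) :
    ∀ δ : Fin m → ℝ, Real.sqrt (∑ i, δ i ^ 2) < σ * stdGaussianCDFInv pA →
      (1 : ENNReal) / 2 <
        (Measure.pi fun _ : Fin m => gaussianReal 0 (σ ^ 2)) {e | d (z + δ + e) = 1} := by
  intro δ hδ
  have hσ' : (0 : ℝ) < σ := hσ
  have hprob : ∀ w, (Measure.pi fun _ : Fin m => gaussianReal 0 (σ ^ 2)) {e | d (w + e) = 1}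
      = ENNReal.ofReal (stdGaussianCDF ((∑ i, u i * w i - c) / σ)) := fun w => by
    rw [← neg_sub, ← pi_gaussianReal_halfspace hσ hu]
    congr 1
    ext e
    simp [hd, mul_add, Finset.sum_add_distrib, add_comm]
  rw [hprob] at hmaj ⊢
  have hle : pA ≤ stdGaussianCDF _ := (ENNReal.ofReal_le_ofReal_iff ENNReal.toReal_nonneg).1 hmaj
  have hr := stdGaussianCDF_stdGaussianCDFInv
    ⟨by linarith, hle.trans_lt (stdGaussianCDF_lt_one _)⟩
  have hrz : σ * stdGaussianCDFInv pA ≤ ∑ i, u i * z i - c :=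
    (le_div_iff₀' hσ').1 (strictMono_stdGaussianCDF.le_iff_le.1 (hr.trans_le hle))
  have hcs := abs_sum_mul_le_sqrt_sum_sq hu δ
  have hpos : 0 < (∑ i, u i * (z + δ) i - c) / σ := by
    simp only [Pi.add_apply, mul_add, Finset.sum_add_distrib]
    exact div_pos (by linarith [neg_abs_le (∑ i, u i * δ i)]) hσ'
  calc (1 : ℝ≥0∞) / 2 = ENNReal.ofReal (stdGaussianCDF 0) := by
        rw [stdGaussianCDF_zero, ENNReal.ofReal_div_of_pos two_pos]; simp
    _ < _ := (ENNReal.ofReal_lt_ofReal_iff_of_nonneg ENNReal.toReal_nonneg).2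
        (strictMono_stdGaussianCDF hpos)

/-- Randomized smoothing robustness in the binary linear (halfspace) case: if the base
classifier is `d z = 1` iff `⟨u, z⟩ ≥ c` with `‖u‖ = 1`, and at input `z` the smoothed
probability of class 1 is at least `p_A > 1/2`, then for every perturbation `δ` with
`‖δ‖₂ < σ Φ⁻¹(p_A)` the smoothed classifier at `z + δ` still predicts class 1 (i.e.
class 1 keeps majority probability `> 1/2`). -/
theorem randomized_smoothing_halfspace {m : ℕ} (σ : NNReal) (hσ : 0 < σ)
    (u : Fin m → ℝ) (hu : ∑ i, u i ^ 2 = 1) (c : ℝ)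
    (d : (Fin m → ℝ) → Fin 2)
    (hd : ∀ z, d z = if c ≤ ∑ i, u i * z i then 1 else 0)
    (z : Fin m → ℝ) (pA : ℝ) (hpA : 1 / 2 < pA) (hpA' : pA ≤ 1)
    (hmaj : ENNReal.ofReal pA ≤
      (Measure.pi fun _ : Fin m => gaussianReal 0 (σ ^ 2)) {e | d (z + e) = 1}) :
    ∀ δ : Fin m → ℝ, Real.sqrt (∑ i, δ i ^ 2) < σ * stdGaussianCDFInv pA →
      (1 : ENNReal) / 2 <
        (Measure.pi fun _ : Fin m => gaussianReal 0 (σ ^ 2)) {e | d (z + δ + e) = 1} :=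
  randomized_smoothing_halfspace_general σ hσ u hu c d hd z pA hpA hmaj
end

section
/- If μ is a probability measure on ℝ^m with compact support, then there exists a closed ball B(z, r) of minimal radius r among all closed balls containing at least half of the mass of μ, i.e., the infimum of radii r such that some closed ball of radius r has μ-measure ≥ 1/2 is attained. -/
/-!
The pairs `(z, r)` with `t ≤ μ (closedBall z r)` form a closed subset of `X × ℝ`, because closed
balls are continuous from above in the radius. A ball of mass exceeding `μ Kᶜ` meets `K`, so all
competitors of radius at most that of a given one have their centres in a compact thickening of
`K`; the radius therefore attains its minimum on a compact set.
-/

open MeasureTheory Metric Filter Topology Set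
open scoped ENNReal

section ClosedBallMass

variable {X : Type*} [PseudoMetricSpace X] [MeasurableSpace X] {μ : Measure X} {t : ℝ≥0∞}

theorem le_measure_closedBall_of_forall_gt [OpensMeasurableSpace X] [IsFiniteMeasure μ]
    {z : X} {r : ℝ} (h : ∀ r' > r, t ≤ μ (closedBall z r')) : t ≤ μ (closedBall z r) := by
  have hlim := tendsto_measure_biInter_gt (μ := μ) (s := closedBall z) (a := r)
    (fun _ _ ↦ measurableSet_closedBall.nullMeasurableSet)
    (fun _ _ _ hij ↦ closedBall_subset_closedBall hij) ⟨r + 1, by linarith, measure_ne_top μ _⟩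
  rw [biInter_gt_closedBall] at hlim
  exact ge_of_tendsto hlim (eventually_nhdsWithin_of_forall h)

theorem isClosed_setOf_le_measure_closedBall [OpensMeasurableSpace X] [IsFiniteMeasure μ] :
    IsClosed {p : X × ℝ | t ≤ μ (closedBall p.1 p.2)} := by
  refine isClosed_iff_frequently.2 fun ⟨z, r⟩ hfreq ↦
    le_measure_closedBall_of_forall_gt fun r' hr' ↦ ?_
  have hnhds : ball z ((r' - r) / 2) ×ˢ Iio (r + (r' - r) / 2) ∈ 𝓝 (z, r) :=
    prod_mem_nhds (ball_mem_nhds _ (by linarith)) (Iio_mem_nhds (by linarith))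
  obtain ⟨⟨w, s⟩, hts, hw, hs⟩ := (hfreq.and_eventually hnhds).exists
  refine le_trans hts (measure_mono (closedBall_subset_closedBall' ?_))
  rw [mem_ball] at hw
  rw [mem_Iio] at hs
  linarith

theorem inter_nonempty_of_measure_compl_lt_measure_closedBall {K : Set X} {z : X} {r : ℝ}
    (h : μ Kᶜ < μ (closedBall z r)) : (closedBall z r ∩ K).Nonempty := by
  by_contra hempty
  exact h.not_ge (measure_mono fun x hx hxK ↦ hempty ⟨x, hx, hxK⟩)

theorem mem_cthickening_of_measure_compl_lt_measure_closedBall {K : Set X} {z : X} {r : ℝ}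
    (h : μ Kᶜ < μ (closedBall z r)) : z ∈ cthickening r K ∧ 0 ≤ r := by
  obtain ⟨k, hkz, hk⟩ := inter_nonempty_of_measure_compl_lt_measure_closedBall h
  rw [mem_closedBall'] at hkz
  exact ⟨mem_cthickening_of_dist_le z k r K hk hkz, dist_nonneg.trans hkz⟩

theorem exists_closedBall_min_radius_of_le_measure [ProperSpace X] [OpensMeasurableSpace X]
    [IsFiniteMeasure μ] {K : Set X} (hK : IsCompact K) (hKt : μ Kᶜ < t) {z₀ : X} {r₀ : ℝ}
    (h₀ : t ≤ μ (closedBall z₀ r₀)) :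
    ∃ z r, 0 ≤ r ∧ t ≤ μ (closedBall z r) ∧
      ∀ z' r', t ≤ μ (closedBall z' r') → r ≤ r' := by
  have hcompetitor {z r} (h : t ≤ μ (closedBall z r)) : z ∈ cthickening r K ∧ 0 ≤ r :=
    mem_cthickening_of_measure_compl_lt_measure_closedBall (hKt.trans_le h)
  set C := {p : X × ℝ | t ≤ μ (closedBall p.1 p.2)} ∩ cthickening r₀ K ×ˢ Icc 0 r₀
  have hC : IsCompact C :=
    (hK.cthickening.prod isCompact_Icc).inter_left isClosed_setOf_le_measure_closedBall
  have hmem₀ : (z₀, r₀) ∈ C :=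
    ⟨h₀, (hcompetitor h₀).1, (hcompetitor h₀).2, le_rfl⟩
  obtain ⟨⟨z, r⟩, ⟨hzr, -⟩, hmin⟩ := hC.exists_isMinOn ⟨_, hmem₀⟩ continuous_snd.continuousOn
  refine ⟨z, r, (hcompetitor hzr).2, hzr, fun z' r' h' ↦ ?_⟩
  rcases le_total r₀ r' with hr' | hr'
  · exact (isMinOn_iff.1 hmin _ hmem₀).trans hr'
  · obtain ⟨hz', hr'_nonneg⟩ := hcompetitor h'
    exact isMinOn_iff.1 hmin (z', r') ⟨h', cthickening_mono hr' K hz', hr'_nonneg, hr'⟩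

end ClosedBallMass

/-- Existence of a minimum enclosing ball of half the mass: if `μ` is a probability
measure on `ℝ^m` with compact support, then among all closed balls of `μ`-measure at
least `1/2` there is one of minimal radius. -/
theorem exists_min_half_mass_ball {m : ℕ}
    (μ : Measure (EuclideanSpace ℝ (Fin m))) [IsProbabilityMeasure μ]
    (hsupp : ∃ K : Set (EuclideanSpace ℝ (Fin m)), IsCompact K ∧ μ Kᶜ = 0) :
    ∃ (z : EuclideanSpace ℝ (Fin m)) (r : ℝ), 0 ≤ r ∧
      (1 : ENNReal) / 2 ≤ μ (closedBall z r) ∧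
      ∀ (z' : EuclideanSpace ℝ (Fin m)) (r' : ℝ),
        (1 : ENNReal) / 2 ≤ μ (closedBall z' r') → r ≤ r' := by
  obtain ⟨K, hK, hKc⟩ := hsupp
  obtain ⟨R, hKR⟩ := hK.isBounded.subset_closedBall 0
  have hμK : μ K = 1 := (prob_compl_eq_zero_iff hK.isClosed.measurableSet).1 hKc
  have hhalf : (1 : ℝ≥0∞) / 2 ≤ μ (closedBall 0 R) :=
    calc (1 : ℝ≥0∞) / 2 ≤ μ K := by rw [hμK]; exact ENNReal.half_le_self
      _ ≤ μ (closedBall 0 R) := measure_mono hKR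
  exact exists_closedBall_min_radius_of_le_measure hK (by rw [hKc]; norm_num) hhalf
end
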